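/- arXiv:0707.1809 — 4 statements merged into one kernel-verified Lean document; each statement's English description precedes it below -/
import Mathlib

section
/- Let I be a set and for each i ∈ I let D_i be a nonempty directed preordered set and M_i : D_i → Ab a directed system of abelian groups. Let D := ∏_{i∈I} D_i, ordered pointwise (so D is a nonempty directed set), and consider the directed system over D whose value at d ∈ D is the abelian group ∏_{i∈I} M_i(d(i)), with transition maps the products of the transition maps of the M_i. Then the canonical homomorphism colim_{d∈D} ( ∏_{i∈I} M_i(d(i)) ) → ∏_{i∈I} ( colim_{D_i} M_i ) is an isomorphism of abelian groups. -/
/-!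
Filtered colimits in `Ab` are computed on elements, and the product order on `D` lets one
choose an index coordinatewise. An element of `∏ᵢ colim Mᵢ` is a family of classes of
`xᵢ ∈ Mᵢ(dᵢ)`, hence the image of `x = (xᵢ) ∈ ∏ᵢ Mᵢ(dᵢ)` at the single index `d = (dᵢ)`.
If the image of `x` vanishes, each `xᵢ` dies at some `eᵢ ≥ dᵢ`, so `x` dies at `e = (eᵢ)`.
-/

open CategoryTheory Limits

universe u

noncomputable section

namespace Statement2

variable {ι : Type u} (D : ι → Type u) [∀ i, Preorder (D i)]

/-- The product `∏_i D_i` with the pointwise preorder (as a type synonym, so that its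
category structure is the one coming from the pointwise preorder). -/
def PiD : Type u := ∀ i, D i

instance : Preorder (PiD D) := inferInstanceAs (Preorder (∀ i, D i))

instance [∀ i, Nonempty (D i)] : Nonempty (PiD D) :=
  inferInstanceAs (Nonempty (∀ i, D i))

instance [∀ i, IsDirected (D i) (· ≤ ·)] : IsDirected (PiD D) (· ≤ ·) where
  directed d d' := by
    choose e he he' using fun i => directed_of (· ≤ ·) (d i) (d' i)
    exact ⟨e, fun i => he i, fun i => he' i⟩

variable (M : ∀ i, D i ⥤ AddCommGrpCat.{u})

/-- The transition maps of the product system: the products of the transition maps. -/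
def prodMap {d d' : PiD D} (h : d ⟶ d') :
    AddCommGrpCat.of (∀ i, (M i).obj (d i)) ⟶ AddCommGrpCat.of (∀ i, (M i).obj (d' i)) :=
  AddCommGrpCat.ofHom
    (AddMonoidHom.mk' (fun x i => (M i).map (homOfLE (leOfHom h i)) (x i))
      (by intro x y; funext i; exact map_add _ _ _))

/-- The directed system `d ↦ ∏_i M_i (d i)` over the pointwise ordered product
`D = ∏_i D_i`, with transition maps the products of those of the `M_i`. -/
def prodSystem : PiD D ⥤ AddCommGrpCat.{u} where
  obj d := AddCommGrpCat.of (∀ i, (M i).obj (d i))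
  map h := prodMap D M h
  map_id d := by
    ext x i
    show (M i).map (homOfLE (leOfHom (𝟙 d) i)) (x i) = x i
    rw [show homOfLE (leOfHom (𝟙 d) i) = 𝟙 (d i) from Subsingleton.elim _ _,
      CategoryTheory.Functor.map_id]
    rfl
  map_comp {d d' d''} h h' := by
    ext x i
    show (M i).map (homOfLE (leOfHom (h ≫ h') i)) (x i) =
      (M i).map (homOfLE (leOfHom h' i)) ((M i).map (homOfLE (leOfHom h i)) (x i))
    rw [show homOfLE (leOfHom (h ≫ h') i) =
        homOfLE (leOfHom h i) ≫ homOfLE (leOfHom h' i) from Subsingleton.elim _ _,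
      CategoryTheory.Functor.map_comp]
    rfl

/-- The cocone on the product system whose point is the product of the colimits,
with structural maps the products of the colimit structural maps. -/
def prodCocone : Cocone (prodSystem D M) where
  pt := AddCommGrpCat.of (∀ i, ↥(colimit (M i)))
  ι :=
    { app := fun d => AddCommGrpCat.ofHom
        (AddMonoidHom.mk' (fun (x : ∀ i, (M i).obj (d i)) i => colimit.ι (M i) (d i) (x i))
          (by
            intro x y; funext i
            exact map_add (colimit.ι (M i) (d i)).hom (x i) (y i)))
      naturality := by
        intro d d' h
        ext x
        funext i
        exact congrArg (fun (f : (M i).obj (d i) ⟶ colimit (M i)) => f.hom (x i))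
          (colimit.w (M i) (homOfLE (leOfHom h i))) }

/-- The canonical homomorphism
`colim_{d ∈ ∏ D_i} (∏_i M_i (d i)) ⟶ ∏_i colim_{D_i} M_i`. -/
def canonicalMap : colimit (prodSystem D M) ⟶ AddCommGrpCat.of (∀ i, ↥(colimit (M i))) :=
  colimit.desc (prodSystem D M) (prodCocone D M)

end Statement2

theorem AddCommGrpCat.exists_map_eq_zero_of_ι_eq_zero {J : Type u} [SmallCategory J]
    [IsFiltered J] (F : J ⥤ AddCommGrpCat.{u}) {j : J} (x : F.obj j)
    (hx : colimit.ι F j x = 0) : ∃ (k : J) (f : j ⟶ k), F.map f x = 0 := by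
  rw [← map_zero (colimit.ι F j).hom] at hx
  obtain ⟨k, f, g, hfg⟩ := Concrete.colimit_exists_of_rep_eq F x 0 hx
  exact ⟨k, f, hfg.trans (map_zero (F.map g).hom)⟩

namespace Statement2

variable {ι : Type u} (D : ι → Type u) [∀ i, Preorder (D i)] (M : ∀ i, D i ⥤ AddCommGrpCat.{u})

theorem canonicalMap_ι_apply (d : PiD D) (x : (prodSystem D M).obj d) :
    canonicalMap D M (colimit.ι (prodSystem D M) d x) = fun i => colimit.ι (M i) (d i) (x i) :=
  ConcreteCategory.congr_hom (colimit.ι_desc (prodCocone D M) d) x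

variable [∀ i, Nonempty (D i)] [∀ i, IsDirected (D i) (· ≤ ·)]

theorem surjective_canonicalMap : Function.Surjective (canonicalMap D M) := by
  intro y
  choose d x hx using fun i => Concrete.colimit_exists_rep (M i) (y i)
  exact ⟨colimit.ι (prodSystem D M) d x, (canonicalMap_ι_apply D M d x).trans (funext hx)⟩

theorem injective_canonicalMap : Function.Injective (canonicalMap D M) := by
  rw [injective_iff_map_eq_zero (canonicalMap D M).hom]
  intro a ha
  obtain ⟨d, x, rfl⟩ := Concrete.colimit_exists_rep (prodSystem D M) a
  rw [canonicalMap_ι_apply] at ha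
  choose e f hf using fun i =>
    AddCommGrpCat.exists_map_eq_zero_of_ι_eq_zero (M i) (x i) (congrFun ha i)
  let h : d ⟶ e := homOfLE fun i => leOfHom (f i)
  have hx : (prodSystem D M).map h x = 0 := funext fun i => hf i
  rw [← colimit.w_apply (prodSystem D M) h x, hx, map_zero]

end Statement2

open Statement2

/-- Let `I` be a set, and for each `i ∈ I` let `D_i` be a nonempty
directed preordered set and `M_i : D_i ⥤ Ab` a directed system of abelian groups.
Let `D = ∏_i D_i` with the pointwise order. Then the canonical homomorphism
`colim_{d ∈ D} (∏_i M_i(d i)) → ∏_i (colim_{D_i} M_i)` is an isomorphism of abelian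
groups. -/
theorem statement2 {ι : Type u} (D : ι → Type u) [∀ i, Preorder (D i)]
    [∀ i, Nonempty (D i)] [∀ i, IsDirected (D i) (· ≤ ·)]
    (M : ∀ i, D i ⥤ AddCommGrpCat.{u}) :
    IsIso (canonicalMap D M) :=
  (ConcreteCategory.isIso_iff_bijective _).2
    ⟨injective_canonicalMap D M, surjective_canonicalMap D M⟩

end
end

section
/- Let u : V′ → V be a continuous map of topological spaces which is a closed map, has finite fibers, and is such that any two distinct points lying in a common fiber of u admit disjoint open neighborhoods in V′. Then for every abelian sheaf F on V′ and every point x ∈ V, the canonical map (u_*F)_x → ∏_{y ∈ u^{-1}(x)} F_y, induced by the germ maps, is an isomorphism of abelian groups. -/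
/-!
Since `u` is closed, every open neighbourhood of the fibre `u⁻¹(x)` contains one of the form
`u⁻¹(U)` with `U ∋ x`, so a germ of `u_*F` at `x` is a section of `F` near the whole fibre.
Injectivity: the set where the germs of a section vanish is open, so a section whose germs vanish
along the fibre vanishes on some `u⁻¹(U)`. Surjectivity: the finitely many fibre points have
pairwise disjoint neighbourhoods, and sections over pairwise disjoint opens always glue.
-/

open CategoryTheory Limits TopologicalSpace Opposite TopCat
open scoped AlgebraicGeometry

universe u

noncomputable section

namespace Statement3

variable {V' V : TopCat.{u}} (u : V' ⟶ V) (F : TopCat.Sheaf AddCommGrpCat.{u} V') (x : V)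

def canonicalStalkMap :
    TopCat.Presheaf.stalk (u _* F.val) x ⟶
      AddCommGrpCat.of (∀ y : (u ⁻¹' {x} : Set V'), ↥(TopCat.Presheaf.stalk F.val (y : V'))) :=
  AddCommGrpCat.ofHom
    (AddMonoidHom.mk'
      (fun s y =>
        (TopCat.Presheaf.stalkPushforward AddCommGrpCat.{u} u F.val (y : V'))
          ((eqToHom (by rw [show u (y : V') = x from y.2]) :
              (u _* F.val).stalk x ⟶ (u _* F.val).stalk (u (y : V'))) s))
      (by intro s t; funext y; simp only [Pi.add_apply]; erw [map_add, map_add]))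

end Statement3

open Statement3

open Filter Topology Function

theorem IsClosedMap.exists_isOpen_mem_preimage_subset {X Y : Type*} [TopologicalSpace X]
    [TopologicalSpace Y] {f : X → Y} (hf : IsClosedMap f) {y : Y} {W : Set X} (hW : IsOpen W)
    (hfiber : f ⁻¹' {y} ⊆ W) : ∃ U : Set Y, IsOpen U ∧ y ∈ U ∧ f ⁻¹' U ⊆ W := by
  obtain ⟨U, hUW, hU, hyU⟩ := eventually_nhds_iff.mp <|
    hf.eventually_nhds_fiber (p := (· ∈ W)) y fun z hz => hW.mem_nhds (hfiber hz)
  exact ⟨U, hU, hyU, fun z hz => hUW _ hz z rfl⟩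

theorem pairwise_disjoint_nhds_fiber {X Y : Type*} [TopologicalSpace X] {f : X → Y}
    (hsep : ∀ y₁ y₂ : X, y₁ ≠ y₂ → f y₁ = f y₂ →
      ∃ U₁ U₂ : Set X, IsOpen U₁ ∧ IsOpen U₂ ∧ y₁ ∈ U₁ ∧ y₂ ∈ U₂ ∧ Disjoint U₁ U₂) (x : Y) :
    Pairwise (Disjoint on fun y : f ⁻¹' {x} => 𝓝 (y : X)) := by
  intro y z hyz
  obtain ⟨U₁, U₂, hU₁, hU₂, hy, hz, hU⟩ :=
    hsep y z (Subtype.coe_ne_coe.mpr hyz) (y.2.trans z.2.symm)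
  exact disjoint_of_disjoint_of_mem hU (hU₁.mem_nhds hy) (hU₂.mem_nhds hz)

namespace TopCat

variable {X : TopCat.{u}}

theorem Sheaf.subsingleton_obj_of_eq_bot (F : X.Sheaf AddCommGrpCat.{u}) {U : Opens X}
    (hU : U = ⊥) : Subsingleton (F.presheaf.obj (op U)) :=
  AddCommGrpCat.subsingleton_of_isZero (F.isTerminalOfEqEmpty hU).isZero

theorem Sheaf.isCompatible_of_pairwise_disjoint (F : X.Sheaf AddCommGrpCat.{u}) {ι : Type*}
    {W : ι → Opens X} (hW : Pairwise (Disjoint on W)) (sf : ∀ i, F.presheaf.obj (op (W i))) :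
    F.presheaf.IsCompatible W sf := by
  intro i j
  rcases eq_or_ne i j with rfl | hij
  · rfl
  · have := F.subsingleton_obj_of_eq_bot (hW hij).eq_bot
    exact Subsingleton.elim _ _

theorem Presheaf.isOpen_setOf_germ_eq_zero (F : X.Presheaf AddCommGrpCat.{u}) (U : Opens X)
    (s : F.obj (op U)) : IsOpen {y | ∃ hy : y ∈ U, F.germ U y hy s = 0} := by
  refine isOpen_iff_forall_mem_open.mpr fun y ⟨hy, hs⟩ => ?_
  obtain ⟨W, hyW, iU, iU', hW⟩ := F.germ_eq y hy hy s 0 (by rw [hs, map_zero])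
  refine ⟨W, fun z hz => ⟨iU.le hz, ?_⟩, W.isOpen, hyW⟩
  rw [← F.germ_res_apply iU z hz, hW, map_zero, map_zero]

end TopCat

namespace Statement3

variable {V' V : TopCat.{u}} {u : V' ⟶ V} (F : TopCat.Sheaf AddCommGrpCat.{u} V') {x : V}

theorem canonicalStalkMap_germ (U : Opens V) (hx : x ∈ U)
    (s : F.presheaf.obj (op ((Opens.map u).obj U))) {y : V'} (hy : u y = x)
    (hyU : y ∈ (Opens.map u).obj U) :
    canonicalStalkMap u F x ((u _* F.presheaf).germ U x hx s) ⟨y, hy⟩ =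
      F.presheaf.germ ((Opens.map u).obj U) y hyU s := by
  subst hy
  simp only [canonicalStalkMap, AddCommGrpCat.ofHom]
  exact TopCat.Presheaf.stalkPushforward_germ_apply AddCommGrpCat.{u} u F.presheaf U y hx s

theorem germ_pushforward_eq_zero (hu : IsClosedMap u) {U : Opens V} (hx : x ∈ U)
    (s : F.presheaf.obj (op ((Opens.map u).obj U)))
    (hs : ∀ y (hyU : y ∈ (Opens.map u).obj U), u y = x → F.presheaf.germ _ y hyU s = 0) :
    (u _* F.presheaf).germ U x hx s = 0 := by
  obtain ⟨U₀, hU₀, hxU₀, hU₀Z⟩ := hu.exists_isOpen_mem_preimage_subset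
    (F.presheaf.isOpen_setOf_germ_eq_zero _ s) fun y hy => ⟨_, hs y (hy ▸ hx : u y ∈ U) hy⟩
  let U' : Opens V := ⟨U₀, hU₀⟩ ⊓ U
  have hU' : U' ≤ U := inf_le_right
  have hs' : (u _* F.presheaf).map (homOfLE hU').op s = 0 := by
    refine TopCat.Presheaf.section_ext F _ _ _ fun z hz => ?_
    obtain ⟨_, hz⟩ := hU₀Z hz.1
    exact (F.presheaf.germ_res_apply _ _ _ s).trans (hz.trans (map_zero _).symm)
  rw [← (u _* F.presheaf).germ_res_apply (homOfLE hU') x ⟨hxU₀, hx⟩, hs', map_zero]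

theorem exists_canonicalStalkMap_eq_germ (hu : IsClosedMap u) {W : Opens V'}
    (hW : u ⁻¹' {x} ⊆ W) (s : F.presheaf.obj (op W)) :
    ∃ a, ∀ y : u ⁻¹' {x}, canonicalStalkMap u F x a y = F.presheaf.germ W y (hW y.2) s := by
  obtain ⟨U, hU, hxU, hUW⟩ := hu.exists_isOpen_mem_preimage_subset W.isOpen hW
  refine ⟨(u _* F.presheaf).germ ⟨U, hU⟩ x hxU (F.presheaf.map (homOfLE hUW).op s),
    fun ⟨y, hy⟩ => ?_⟩
  rw [canonicalStalkMap_germ F ⟨U, hU⟩ hxU _ hy (hy ▸ hxU : u y ∈ U)]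
  exact F.presheaf.germ_res_apply (homOfLE hUW) _ _ s

theorem canonicalStalkMap_injective (hu : IsClosedMap u) :
    Function.Injective (canonicalStalkMap u F x) := by
  refine (injective_iff_map_eq_zero (canonicalStalkMap u F x).hom).mpr fun a ha => ?_
  obtain ⟨U, hx, s, rfl⟩ := (u _* F.presheaf).exists_germ_eq a
  refine germ_pushforward_eq_zero F hu hx s fun y hyU hy => ?_
  rw [← canonicalStalkMap_germ F U hx s hy hyU]
  exact congr_fun ha ⟨y, hy⟩

theorem canonicalStalkMap_surjective (hu : IsClosedMap u) (hfin : (u ⁻¹' {x}).Finite)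
    (hsep : Pairwise (Disjoint on fun y : u ⁻¹' {x} => 𝓝 (y : V'))) :
    Function.Surjective (canonicalStalkMap u F x) := by
  intro g
  have := hfin.to_subtype
  choose W hyW s hs using fun y : u ⁻¹' {x} => F.presheaf.exists_germ_eq (g y)
  obtain ⟨t, ht, htd⟩ := hsep.exists_mem_filter_of_disjoint
  let D : u ⁻¹' {x} → Opens V' := fun y => ⟨interior (t y), isOpen_interior⟩ ⊓ W y
  have hyD : ∀ y, (y : V') ∈ D y := fun y => ⟨mem_interior_iff_mem_nhds.mpr (ht y), hyW y⟩
  have hD : Pairwise (Disjoint on D) := fun y z hyz => Opens.coe_disjoint.mp <|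
    (htd hyz : Disjoint (t y) (t z)).mono (fun _ h => interior_subset h.1)
      (fun _ h => interior_subset h.1)
  obtain ⟨gl, hgl, -⟩ := F.existsUnique_gluing D
    (fun y => F.presheaf.map (homOfLE inf_le_right).op (s y))
    (F.isCompatible_of_pairwise_disjoint hD _)
  obtain ⟨a, ha⟩ := exists_canonicalStalkMap_eq_germ F hu (W := ⨆ y, D y)
    (fun y hy => Opens.mem_iSup.mpr ⟨⟨y, hy⟩, hyD _⟩) gl
  refine ⟨a, funext fun y => ?_⟩
  rw [ha, ← F.presheaf.germ_res_apply (Opens.leSupr D y) y (hyD y), hgl y,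
    F.presheaf.germ_res_apply, hs]

end Statement3

/-- Let `u : V′ → V` be a continuous map of topological spaces which is
closed, has finite fibers, and such that any two distinct points in a common fiber admit
disjoint open neighborhoods. Then for every abelian sheaf `F` on `V′` and every `x ∈ V`,
the canonical map `(u_*F)_x → ∏_{y ∈ u⁻¹(x)} F_y` induced by the germ maps is an
isomorphism of abelian groups. -/
theorem statement3 {V' V : TopCat.{u}} (u : V' ⟶ V)
    (hclosed : IsClosedMap u)
    (hfin : ∀ x : V, (u ⁻¹' {x} : Set V').Finite)
    (hsep : ∀ y₁ y₂ : V', y₁ ≠ y₂ → u y₁ = u y₂ →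
      ∃ U₁ U₂ : Set V', IsOpen U₁ ∧ IsOpen U₂ ∧ y₁ ∈ U₁ ∧ y₂ ∈ U₂ ∧ Disjoint U₁ U₂)
    (F : TopCat.Sheaf AddCommGrpCat.{u} V') (x : V) :
    IsIso (canonicalStalkMap u F x) := by
  rw [ConcreteCategory.isIso_iff_bijective]
  exact ⟨canonicalStalkMap_injective F hclosed, canonicalStalkMap_surjective F hclosed (hfin x)
    (pairwise_disjoint_nhds_fiber hsep x)⟩

end
end

section
/- Let (C, J) be a site such that C has finite products, and let T be an object of C such that for every object X of C the sieve on X generated by the product projection X × T → X is a J-covering sieve. For an abelian sheaf F on (C, J) and r ≥ 0, let C^r_T(F) be the abelian sheaf X ↦ F(X × T^{r+1}) (where T^{r+1} is the (r+1)-fold product of T), with differential d : C^{r-1}_T(F) → C^r_T(F) given by Σ_{j=0}^{r} (−1)^j F(id_X × q_j), where q_j : T^{r+1} → T^r is the product projection deleting the j-th factor, and with augmentation F → C^0_T(F) induced by the projections X × T → X. Then the augmented complex 0 → F → C^0_T(F) → C^1_T(F) → C^2_T(F) → ⋯ is an exact complex in the abelian category of abelian sheaves on (C, J). -/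
/-!
On an object `Y` equipped with a morphism `τ : Y ⟶ T`, inserting `τ` as a new first coordinate
`Y × T^n → Y × T^(n+1)` gives a contracting homotopy of the augmented complex of sections
`F(Y) → F(Y × T) → F(Y × T²) → ⋯` (an extra degeneracy). Every `X` is covered by `X × T ⟶ X`,
and `X × T` carries `τ = snd`; so a cocycle on `X` becomes a coboundary after restriction to this
covering, which is exactly exactness in the category of sheaves.
-/

open CategoryTheory Limits

universe u

noncomputable section

namespace Statement5

variable {C : Type u} [SmallCategory C] [HasFiniteProducts C]

/-- The `n`-fold product `T^n` (as a `Fin n`-indexed product). -/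
def pow (T : C) (n : ℕ) : C := ∏ᶜ fun _ : Fin n => T

/-- The projection `T^{r+2} → T^{r+1}` deleting the `j`-th factor. -/
def face (T : C) (r : ℕ) (j : Fin (r + 2)) : pow T (r + 2) ⟶ pow T (r + 1) :=
  Pi.lift fun i : Fin (r + 1) => Pi.π (fun _ : Fin (r + 2) => T) (j.succAbove i)

/-- The natural transformation `(X ↦ X × T^{r+2}) ⟶ (X ↦ X × T^{r+1})` induced by the
face map. -/
def faceNat (T : C) (r : ℕ) (j : Fin (r + 2)) :
    prod.functor.flip.obj (pow T (r + 2)) ⟶ prod.functor.flip.obj (pow T (r + 1)) :=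
  prod.functor.flip.map (face T r j)

variable (J : GrothendieckTopology C) (T : C)
  [inst : ∀ n : ℕ, (prod.functor.flip.obj (pow T n)).IsContinuous J J]

/-- The `r`-th term `C^r_T(F) : X ↦ F(X × T^{r+1})` of the Čech–Alexander complex. -/
def CechAl (F : Sheaf J AddCommGrpCat.{u}) (r : ℕ) : Sheaf J AddCommGrpCat.{u} :=
  ((prod.functor.flip.obj (pow T (r + 1))).sheafPushforwardContinuous
    AddCommGrpCat.{u} J J).obj F

/-- The map `C^r_T(F) ⟶ C^{r+1}_T(F)` induced by the `j`-th face map. -/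
def CechAlTerm (F : Sheaf J AddCommGrpCat.{u}) (r : ℕ) (j : Fin (r + 2)) :
    CechAl J T F r ⟶ CechAl J T F (r + 1) :=
  ⟨Functor.whiskerRight (NatTrans.op (faceNat T r j)) F.val⟩

/-- The Čech–Alexander differential, the alternating sum `Σ (-1)^j F(id_X × q_j)`. -/
def CechAlD (F : Sheaf J AddCommGrpCat.{u}) (r : ℕ) : CechAl J T F r ⟶ CechAl J T F (r + 1) :=
  ∑ j : Fin (r + 2), ((-1 : ℤ) ^ (j : ℕ)) • CechAlTerm J T F r j

/-- The natural transformation `(X ↦ X × T) ⟶ 𝟭 C` given by the first projections. -/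
def projNat (T : C) : prod.functor.flip.obj (pow T 1) ⟶ 𝟭 C where
  app X := prod.fst
  naturality X Y f := by exact prod.map_fst _ _

/-- The augmentation `F ⟶ C^0_T(F)` induced by the projections `X × T → X`. -/
def CechAlAug (F : Sheaf J AddCommGrpCat.{u}) : F ⟶ CechAl J T F 0 :=
  ⟨Functor.whiskerRight (NatTrans.op (projNat T)) F.val⟩

end Statement5

open Opposite

namespace Statement5

section LocalOnProd

universe v

variable {C : Type u} [Category.{v} C] [HasBinaryProducts C] {J : GrothendieckTopology C} {T : C}
  (hT : ∀ X : C, Sieve.generate (Presieve.singleton (prod.fst : X ⨯ T ⟶ X)) ∈ J X)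
include hT

theorem map_fst_injective (A : Sheaf J AddCommGrpCat.{max u v}) (X : C) :
    Function.Injective (A.obj.map (prod.fst : X ⨯ T ⟶ X).op) := by
  intro a b hab
  refine A.isSeparated X _ (hT X) a b ?_
  rintro Z _ ⟨_, g, _, ⟨⟩, rfl⟩
  simp only [op_comp, Functor.map_comp, ConcreteCategory.comp_apply, hab]

theorem app_injective_of_app_prod_injective {A B : Sheaf J AddCommGrpCat.{max u v}}
    (φ : A ⟶ B) (hφ : ∀ X : C, Function.Injective (φ.hom.app (op (X ⨯ T)))) (X : C) :
    Function.Injective (φ.hom.app (op X)) := by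
  intro a b hab
  apply map_fst_injective hT A X
  apply hφ X
  rw [NatTrans.naturality_apply, NatTrans.naturality_apply, hab]

theorem exact_of_exact_on_prod (S : ShortComplex (Sheaf J AddCommGrpCat.{max u v}))
    (hS : ∀ (X : C) (x : S.X₂.obj.obj (op (X ⨯ T))), S.g.hom.app _ x = 0 →
      ∃ y, S.f.hom.app _ y = x) : S.Exact := by
  rw [S.exact_iff_kernel_ι_comp_cokernel_π_zero]
  ext ⟨X⟩ k
  apply map_fst_injective hT _ X
  obtain ⟨y, hy⟩ := hS X (S.X₂.obj.map (prod.fst : X ⨯ T ⟶ X).op ((kernel.ι S.g).hom.app _ k))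
    (by rw [← NatTrans.naturality_apply, ← ConcreteCategory.comp_apply, ← NatTrans.comp_app,
      ← ObjectProperty.FullSubcategory.comp_hom, kernel.condition]; simp)
  rw [ObjectProperty.FullSubcategory.comp_hom, NatTrans.comp_app, ConcreteCategory.comp_apply,
    ← NatTrans.naturality_apply, ← hy, ← ConcreteCategory.comp_apply, ← NatTrans.comp_app,
    ← ObjectProperty.FullSubcategory.comp_hom, cokernel.condition]
  simp

end LocalOnProd

theorem exists_apply_eq_of_comp_add_comp_eq_id {A B D : AddCommGrpCat}
    {f : A ⟶ B} {g : B ⟶ D} {h : B ⟶ A} {k : D ⟶ B} (hfg : h ≫ f + g ≫ k = 𝟙 B) {x : B}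
    (hx : g x = 0) : ∃ y, f y = x :=
  ⟨h x, by simpa [hx] using ConcreteCategory.congr_hom hfg x⟩

theorem alternatingSum_comp_alternatingSum_eq_zero {V : Type*} [Category V] [Preadditive V]
    {A : ℕ → V} (δ : ∀ n, Fin (n + 2) → (A n ⟶ A (n + 1)))
    (hδ : ∀ n (i j : Fin (n + 2)), i ≤ j →
      δ n i ≫ δ (n + 1) j.succ = δ n j ≫ δ (n + 1) i.castSucc) (n : ℕ) :
    (∑ i : Fin (n + 2), (-1 : ℤ) ^ (i : ℕ) • δ n i) ≫
      ∑ k : Fin (n + 3), (-1 : ℤ) ^ (k : ℕ) • δ (n + 1) k = 0 := by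
  simp only [Preadditive.comp_sum, Preadditive.sum_comp, ← Finset.sum_product']
  -- the terms `(k, i)` with `k ≤ i` cancel against those with `k > i` via `(k, i) ↦ (i + 1, k)`
  let P := Fin (n + 3) × Fin (n + 2)
  let S : Finset P := {ki : P | (ki.1 : ℕ) ≤ (ki.2 : ℕ)}
  rw [Finset.univ_product_univ, ← Finset.sum_add_sum_compl S, ← eq_neg_iff_add_eq_zero,
    ← Finset.sum_neg_distrib]
  let φ : ∀ ki : P, ki ∈ S → P := fun ki hki =>
    (ki.2.succ, ki.1.castLT (lt_of_le_of_lt (Finset.mem_filter.mp hki).2 ki.2.is_lt))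
  apply Finset.sum_bij φ
  · intro ki hki
    simp_rw [S, φ, Finset.compl_filter, Finset.mem_filter_univ, Fin.val_succ,
      Fin.val_castLT] at hki ⊢
    lia
  · rintro ⟨k, i⟩ hki ⟨k', i'⟩ hki' h
    rw [Prod.mk_inj]
    exact ⟨by simpa [φ, Fin.castSucc_castLT] using! congr_arg Fin.castSucc (congr_arg Prod.snd h),
      by simpa [φ] using! congr_arg Prod.fst h⟩
  · rintro ⟨k', i'⟩ hki'
    simp_rw [S, Finset.compl_filter, Finset.mem_filter_univ, not_le] at hki'
    refine ⟨(Fin.castSucc i', k'.pred ?_), ?_, ?_⟩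
    · rintro rfl
      simp only [Fin.val_zero, not_lt_zero] at hki'
    · simpa [S] using! Nat.le_sub_one_of_lt hki'
    · simp only [φ, Fin.castLT_castSucc, Fin.succ_pred]
  · rintro ⟨k, i⟩ hki
    have hk : (k : ℕ) ≤ i := by simpa [S] using hki
    cases k using Fin.lastCases with
    | last => simp at hk; omega
    | cast k =>
      replace hk : k ≤ i := Fin.le_def.mpr hk
      simp only [φ, Preadditive.zsmul_comp, Preadditive.comp_zsmul, smul_smul, ← neg_smul,
        Fin.castLT_castSucc, hδ n _ _ hk]
      congr 1
      simp only [Fin.val_castSucc, Fin.val_succ, pow_succ]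
      ring

variable {C : Type u} [SmallCategory C] [HasFiniteProducts C]

def pow.π (T : C) {n : ℕ} (i : Fin n) : pow T n ⟶ T := Pi.π _ i

def pow.lift {X T : C} {n : ℕ} (f : Fin n → (X ⟶ T)) : X ⟶ pow T n := Pi.lift f

@[simp]
theorem pow.lift_π {X T : C} {n : ℕ} (f : Fin n → (X ⟶ T)) (i : Fin n) :
    pow.lift f ≫ pow.π T i = f i :=
  Pi.lift_π f i

theorem pow.hom_ext {X T : C} {n : ℕ} {f g : X ⟶ pow T n}
    (h : ∀ i, f ≫ pow.π T i = g ≫ pow.π T i) : f = g :=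
  Pi.hom_ext _ _ h

@[simp]
theorem face_π (T : C) (r : ℕ) (j : Fin (r + 2)) (i : Fin (r + 1)) :
    face T r j ≫ pow.π T i = pow.π T (j.succAbove i) :=
  pow.lift_π _ i

theorem face_comp_face (T : C) {r : ℕ} {i j : Fin (r + 2)} (hij : i ≤ j) :
    face T (r + 1) i.castSucc ≫ face T r j = face T (r + 1) j.succ ≫ face T r i := by
  refine pow.hom_ext fun k => ?_
  simp only [Category.assoc, face_π]
  refine congrArg _ (Fin.ext ?_)
  simp only [Fin.succAbove, Fin.lt_def, Fin.val_castSucc, Fin.val_succ]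
  split_ifs <;> simp_all <;> omega

theorem faceNat_comp_projNat (T : C) : faceNat T 0 1 ≫ projNat T = faceNat T 0 0 ≫ projNat T := by
  ext X
  exact (prod.map_fst _ _).trans (prod.map_fst _ _).symm

section Contraction

variable {Y T : C} (τ : Y ⟶ T)

def consMap (n : ℕ) : Y ⨯ pow T n ⟶ Y ⨯ pow T (n + 1) :=
  prod.lift prod.fst <| pow.lift <| Fin.cases (prod.fst ≫ τ) fun i => prod.snd ≫ pow.π T i

def graphMap : Y ⟶ Y ⨯ pow T 1 :=
  prod.lift (𝟙 Y) (pow.lift fun _ => τ)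

@[simp]
theorem consMap_fst (n : ℕ) : consMap τ n ≫ prod.fst = prod.fst := prod.lift_fst _ _

@[simp]
theorem consMap_snd_π_zero (n : ℕ) : consMap τ n ≫ prod.snd ≫ pow.π T 0 = prod.fst ≫ τ := by
  rw [consMap, prod.lift_snd_assoc, pow.lift_π, Fin.cases_zero]

@[simp]
theorem consMap_snd_π_succ (n : ℕ) (i : Fin n) :
    consMap τ n ≫ prod.snd ≫ pow.π T i.succ = prod.snd ≫ pow.π T i := by
  rw [consMap, prod.lift_snd_assoc, pow.lift_π, Fin.cases_succ]

@[simp]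
theorem graphMap_fst : graphMap τ ≫ prod.fst = 𝟙 Y := prod.lift_fst _ _

theorem consMap_comp_face_zero (n : ℕ) :
    consMap τ (n + 1) ≫ prod.map (𝟙 Y) (face T n 0) = 𝟙 _ := by
  apply prod.hom_ext
  · simp
  · refine pow.hom_ext fun i => ?_
    simp

theorem consMap_comp_face_succ (n : ℕ) (k : Fin (n + 2)) :
    consMap τ (n + 2) ≫ prod.map (𝟙 Y) (face T (n + 1) k.succ) =
      prod.map (𝟙 Y) (face T n k) ≫ consMap τ (n + 1) := by
  apply prod.hom_ext
  · simp
  · refine pow.hom_ext fun i => ?_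
    cases i using Fin.cases with
    | zero => simp
    | succ i => simp [Fin.succ_succAbove_succ]

theorem consMap_comp_face_one :
    consMap τ 1 ≫ prod.map (𝟙 Y) (face T 0 1) = prod.fst ≫ graphMap τ := by
  apply prod.hom_ext
  · simp
  · refine pow.hom_ext fun i => ?_
    obtain rfl := Fin.fin_one_eq_zero i
    simp [graphMap, prod.lift_snd_assoc]

theorem fst_comp_graphMap {A : Type*} [Category A] (P : Cᵒᵖ ⥤ A) :
    P.map (prod.fst : Y ⨯ pow T 1 ⟶ Y).op ≫ P.map (graphMap τ).op = 𝟙 _ := by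
  rw [← P.map_comp, ← op_comp, graphMap_fst, op_id, P.map_id]

variable {A : Type*} [Category A] [Preadditive A] (P : Cᵒᵖ ⥤ A)

def cechAlDiff (T : C) (Y : C) (r : ℕ) :
    P.obj (op (Y ⨯ pow T (r + 1))) ⟶ P.obj (op (Y ⨯ pow T (r + 2))) :=
  ∑ j : Fin (r + 2), (-1 : ℤ) ^ (j : ℕ) • P.map (prod.map (𝟙 Y) (face T r j)).op

theorem consMap_comp_cechAlDiff_add_cechAlDiff_comp_consMap (r : ℕ) :
    P.map (consMap τ (r + 1)).op ≫ cechAlDiff P T Y r +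
      cechAlDiff P T Y (r + 1) ≫ P.map (consMap τ (r + 2)).op = 𝟙 _ := by
  rw [cechAlDiff, cechAlDiff, Preadditive.comp_sum, Preadditive.sum_comp,
    Fin.sum_univ_succ (n := r + 2)]
  simp only [Preadditive.comp_zsmul, Preadditive.zsmul_comp, ← P.map_comp, ← op_comp,
    consMap_comp_face_zero, consMap_comp_face_succ]
  simp only [op_id, P.map_id, Fin.val_zero, pow_zero, one_smul, Fin.val_succ, pow_succ, mul_neg_one,
    neg_smul, Finset.sum_neg_distrib]
  abel

theorem graphMap_comp_fst_add_cechAlDiff_comp_consMap :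
    P.map (graphMap τ).op ≫ P.map (prod.fst : Y ⨯ pow T 1 ⟶ Y).op +
      cechAlDiff P T Y 0 ≫ P.map (consMap τ 1).op = 𝟙 _ := by
  rw [cechAlDiff, Preadditive.sum_comp, Fin.sum_univ_two]
  simp only [Preadditive.zsmul_comp, ← P.map_comp, ← op_comp, consMap_comp_face_zero,
    consMap_comp_face_one]
  simp only [op_id, P.map_id, Fin.val_zero, Fin.val_one, pow_zero, pow_one, one_smul, neg_smul]
  abel

end Contraction

section CechAlexander

variable (J : GrothendieckTopology C) (T : C)
  [∀ n : ℕ, (prod.functor.flip.obj (pow T n)).IsContinuous J J] (F : Sheaf J AddCommGrpCat.{u})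

theorem CechAlD_app (r : ℕ) (Y : C) :
    (CechAlD J T F r).hom.app (op Y) = cechAlDiff F.obj T Y r := by
  have := (sheafToPresheaf J AddCommGrpCat.{u} ⋙ (evaluation _ _).obj (op Y)).map_sum
    (fun j : Fin (r + 2) => (-1 : ℤ) ^ (j : ℕ) • CechAlTerm J T F r j) Finset.univ
  simp only [Functor.map_zsmul] at this
  exact this

theorem CechAlTerm_comp_CechAlTerm {r : ℕ} {i j : Fin (r + 2)} (hij : i ≤ j) :
    CechAlTerm J T F r i ≫ CechAlTerm J T F (r + 1) j.succ =
      CechAlTerm J T F r j ≫ CechAlTerm J T F (r + 1) i.castSucc := by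
  ext ⟨Y⟩ : 3
  change F.obj.map _ ≫ F.obj.map _ = F.obj.map _ ≫ F.obj.map _
  simp only [← F.obj.map_comp, NatTrans.op_app, ← op_comp, ← NatTrans.comp_app, faceNat,
    ← Functor.map_comp, face_comp_face T hij]

theorem CechAlD_comp_CechAlD (r : ℕ) : CechAlD J T F r ≫ CechAlD J T F (r + 1) = 0 :=
  alternatingSum_comp_alternatingSum_eq_zero (CechAlTerm J T F)
    (fun _ _ _ => CechAlTerm_comp_CechAlTerm J T F) r

theorem CechAlAug_comp_CechAlD : CechAlAug J T F ≫ CechAlD J T F 0 = 0 := by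
  have h : CechAlAug J T F ≫ CechAlTerm J T F 0 1 = CechAlAug J T F ≫ CechAlTerm J T F 0 0 := by
    ext ⟨Y⟩ : 3
    change F.obj.map _ ≫ F.obj.map _ = F.obj.map _ ≫ F.obj.map _
    simp only [← F.obj.map_comp, NatTrans.op_app, ← NatTrans.comp_app, ← op_comp,
      faceNat_comp_projNat]
  rw [CechAlD, Preadditive.comp_sum, Fin.sum_univ_two, Preadditive.comp_zsmul,
    Preadditive.comp_zsmul, h]
  simp

variable {J T} {Y : C}

theorem CechAlAug_app_injective (τ : Y ⟶ T) :
    Function.Injective ((CechAlAug J T F).hom.app (op Y)) :=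
  Function.LeftInverse.injective (g := F.obj.map (graphMap τ).op)
    (ConcreteCategory.congr_hom (fst_comp_graphMap τ F.obj))

theorem exists_CechAlAug_app_eq (τ : Y ⟶ T) {x : (CechAl J T F 0).obj.obj (op Y)}
    (hx : (CechAlD J T F 0).hom.app (op Y) x = 0) :
    ∃ a, (CechAlAug J T F).hom.app (op Y) a = x := by
  rw [CechAlD_app] at hx
  exact exists_apply_eq_of_comp_add_comp_eq_id
    (graphMap_comp_fst_add_cechAlDiff_comp_consMap τ F.obj) hx

theorem exists_CechAlD_app_eq (τ : Y ⟶ T) (r : ℕ) {x : (CechAl J T F (r + 1)).obj.obj (op Y)}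
    (hx : (CechAlD J T F (r + 1)).hom.app (op Y) x = 0) :
    ∃ y, (CechAlD J T F r).hom.app (op Y) y = x := by
  rw [CechAlD_app] at hx ⊢
  exact exists_apply_eq_of_comp_add_comp_eq_id
    (consMap_comp_cechAlDiff_add_cechAlDiff_comp_consMap τ F.obj r) hx

end CechAlexander

end Statement5

open Statement5

/-- Let `(C, J)` be a site with finite products, and `T` an object such
that for every `X` the sieve generated by the projection `X × T → X` is `J`-covering.
(The instance hypothesis records the fact, noted in the context, that `X ↦ F(X × T^n)`
is a sheaf whenever `F` is.) Then for every abelian sheaf `F` on `(C, J)` the augmented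
Čech–Alexander complex `0 → F → C⁰_T(F) → C¹_T(F) → ⋯` is exact: the augmentation is a
monomorphism and the complex is exact at every spot. -/
theorem statement5 {C : Type u} [SmallCategory C] [HasFiniteProducts C]
    (J : GrothendieckTopology C) (T : C)
    [∀ n : ℕ, (prod.functor.flip.obj (pow T n)).IsContinuous J J]
    (hT : ∀ X : C, Sieve.generate (Presieve.singleton (prod.fst : X ⨯ T ⟶ X)) ∈ J X)
    (F : Sheaf J AddCommGrpCat.{u}) :
    Mono (CechAlAug J T F) ∧
    (∃ w : CechAlAug J T F ≫ CechAlD J T F 0 = 0,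
      (ShortComplex.mk (CechAlAug J T F) (CechAlD J T F 0) w).Exact) ∧
    ∀ r : ℕ, ∃ w : CechAlD J T F r ≫ CechAlD J T F (r + 1) = 0,
      (ShortComplex.mk (CechAlD J T F r) (CechAlD J T F (r + 1)) w).Exact :=
  ⟨Sheaf.mono_of_injective _ fun ⟨X⟩ ↦ app_injective_of_app_prod_injective hT _
      (fun X ↦ CechAlAug_app_injective F (prod.snd : X ⨯ T ⟶ T)) X,
    ⟨CechAlAug_comp_CechAlD J T F, exact_of_exact_on_prod hT _ fun X _ ↦
      exists_CechAlAug_app_eq F (prod.snd : X ⨯ T ⟶ T)⟩,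
    fun r ↦ ⟨CechAlD_comp_CechAlD J T F r, exact_of_exact_on_prod hT _ fun X _ ↦
      exists_CechAlD_app_eq F (prod.snd : X ⨯ T ⟶ T) r⟩⟩

end
end

section
/- Let (C, J) be a site, let T, T₁, T₂ be presheaves of sets on C with morphisms u₁ : T₁ → T and u₂ : T₂ → T, and let T₁ ×_T T₂ be their fiber product presheaf with projections p₁ : T₁ ×_T T₂ → T₁ and p₂ : T₁ ×_T T₂ → T₂. Then for every abelian sheaf F on the localized site (C_{/T₂}, J_{T₂}) there is a natural isomorphism u₁^{-1}(u_{2*} F) ≅ p_{1*}(p₂^{-1} F) of abelian sheaves on (C_{/T₁}, J_{T₁}). -/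
/-!
STATEMENT 7: Base change for localized sites: for presheaves `T₁ → T ← T₂` on a site
`(C, J)` and an abelian sheaf `F` on `C_{/T₂}`, there is a natural isomorphism
`u₁⁻¹ (u₂_* F) ≅ p₁_* (p₂⁻¹ F)` of abelian sheaves on `C_{/T₁}`, where
`T₁ ×_T T₂` is the fiber product presheaf with projections `p₁, p₂`.
-/

open CategoryTheory Limits Opposite

universe u

noncomputable section

namespace SliceSite

variable {C : Type u} [SmallCategory C]

/-- The sieve on `X` underlying a sieve on `(X, s)` in the category
`C_{/T} = CostructuredArrow yoneda T` of elements of `T`: it consists of all morphisms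
of `C` underlying a morphism of the given sieve. -/
def underSieve {T : Cᵒᵖ ⥤ Type u} (e : CostructuredArrow yoneda T) (R : Sieve e) :
    Sieve e.left where
  arrows Y g := R.arrows (CostructuredArrow.homMk' e g)
  downward_closed := by
    intro Y Y' g hg h
    rw [CostructuredArrow.homMk'_comp]
    exact R.downward_closed (R.downward_closed hg _) _

/-- The induced Grothendieck topology `J_T` on `C_{/T}`: a sieve is covering if and
only if its sieve of underlying morphisms of `C` is `J`-covering. -/
def sliceTopology (J : GrothendieckTopology C) (T : Cᵒᵖ ⥤ Type u) :
    GrothendieckTopology (CostructuredArrow yoneda T) where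
  sieves e R := underSieve e R ∈ J e.left
  top_mem' e := J.superset_covering (fun Y f _ => trivial) (J.top_mem e.left)
  pullback_stable' := by
    intro e e' R η hR
    refine J.superset_covering ?_ (J.pullback_stable η.left hR)
    intro Y f hf
    have p : CostructuredArrow.mk (yoneda.map (f ≫ η.left) ≫ e.hom) =
        CostructuredArrow.mk (yoneda.map f ≫ e'.hom) := by
      rw [Functor.map_comp, Category.assoc, CostructuredArrow.w]
    have heq : CostructuredArrow.homMk' e (f ≫ η.left) =
        eqToHom p ≫ (CostructuredArrow.homMk' e' f ≫ η) := by
      apply CostructuredArrow.hom_ext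
      simp
    have hf' : R.arrows (CostructuredArrow.homMk' e (f ≫ η.left)) := hf
    rw [heq] at hf'
    have := R.downward_closed hf' (eqToHom p.symm)
    simp at this
    exact this
  transitive' := by
    intro e R hR S hS
    refine J.transitive hR _ ?_
    intro Y f hf
    refine J.superset_covering ?_ (hS (f := CostructuredArrow.homMk' e f) hf)
    intro Y' g hg
    show S.arrows (CostructuredArrow.homMk' e (g ≫ f))
    rw [CostructuredArrow.homMk'_comp]
    exact S.downward_closed hg _

end SliceSite

open SliceSite

/-!
The functors `CostructuredArrow.map` between categories of elements are cocontinuous, so the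
direct images, being right adjoint to precomposition, are right Kan extensions along them, and
the claim becomes a base change formula for right Kan extensions. Such a formula holds for any
Guitart exact square: a pointwise right Kan extension is a limit over a comma category, and
exactness makes the comparison functor between the two comma categories initial. The square of
categories of elements given by `p₁, p₂, u₁, u₂` is Guitart exact, because every category of
factorisations of a morphism `f : (X₂, s₂) ⟶ (X₃, s₃)` over `T` has a weakly initial object:
the element `(T₁(f)(s₃), s₂)` of `T₁ ×_T T₂` over `X₂`.
-/

universe v₁ v₂ v₃ v₄ v₅ u₁ u₂ u₃ u₄ u₅

namespace CategoryTheory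

variable {C₁ : Type u₁} {C₂ : Type u₂} {C₃ : Type u₃} {C₄ : Type u₄} {D : Type u₅}
  [Category.{v₁} C₁] [Category.{v₂} C₂] [Category.{v₃} C₃] [Category.{v₄} C₄]
  [Category.{v₅} D]

namespace Functor.RightExtension

variable {T : C₁ ⥤ C₂} {L : C₁ ⥤ C₃} {R : C₂ ⥤ C₄} {B : C₃ ⥤ C₄}
  {F : C₃ ⥤ D} (E : B.RightExtension F)

abbrev compTwoSquare (w : TwoSquare T L R B) : T.RightExtension (L ⋙ F) :=
  RightExtension.mk (R ⋙ E.left)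
    ((associator _ _ _).inv ≫ whiskerRight w.natTrans _ ≫ (associator _ _ _).hom ≫
      whiskerLeft L E.hom)

variable {E} in
def IsPointwiseRightKanExtension.compTwoSquare
    (h : E.IsPointwiseRightKanExtension) (w : TwoSquare T L R B) [w.GuitartExact] :
    (E.compTwoSquare w).IsPointwiseRightKanExtension := fun X₂ ↦
  ((Initial.isLimitWhiskerEquiv (w.structuredArrowDownwards X₂) _).symm (h (R.obj X₂))).ofIsoLimit
    (Cone.ext (Iso.refl _) (fun j ↦ by
      change E.left.map (R.map j.hom ≫ w.natTrans.app j.right) ≫ E.hom.app (L.obj j.right) =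
        𝟙 _ ≫ E.left.map (R.map j.hom) ≫ 𝟙 _ ≫ E.left.map (w.natTrans.app j.right) ≫ 𝟙 _ ≫
          E.hom.app (L.obj j.right)
      simp))

end Functor.RightExtension

namespace TwoSquare

open CategoryTheory.Functor

section RanBaseChange

variable {T : C₁ ⥤ C₂} {L : C₁ ⥤ C₃} {R : C₂ ⥤ C₄} {B : C₃ ⥤ C₄} (w : TwoSquare T L R B)
  [∀ F : C₁ ⥤ D, T.HasRightKanExtension F] [∀ F : C₃ ⥤ D, B.HasRightKanExtension F]

def ranBaseChange :
    B.ran ⋙ (whiskeringLeft C₂ C₄ D).obj R ⟶ (whiskeringLeft C₁ C₃ D).obj L ⋙ T.ran where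
  app F := (T.ranAdjunction D).homEquiv (R ⋙ B.ran.obj F) (L ⋙ F)
    ((RightExtension.mk _ (B.ranCounit.app F : B ⋙ B.ran.obj F ⟶ F)).compTwoSquare w).hom
  naturality {F₁ F₂} τ := by
    dsimp
    refine (Adjunction.homEquiv_naturality_left ..).symm.trans
      (Eq.trans ?_ (Adjunction.homEquiv_naturality_right ..))
    congr 1
    ext X
    have hτ := congr_app (B.ranCounit.naturality τ) (L.obj X)
    have hw := (B.ran.map τ).naturality (w.natTrans.app X)
    dsimp at hτ hw
    dsimp [RightExtension.mk]
    simp only [whiskerLeft_twice, RightExtension.mk_hom, CostructuredArrow.mk_left,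
      CostructuredArrow.mk_hom_eq_self, Category.assoc, Iso.hom_inv_id_assoc, NatTrans.comp_app,
      comp_obj, associator_inv_app, Functor.whiskerLeft_app, Functor.whiskerRight_app,
      associator_hom_app, Category.id_comp]
    rw [← reassoc_of% hw, hτ]

instance isIso_ranBaseChange_app (F : C₃ ⥤ D) [B.HasPointwiseRightKanExtension F]
    [w.GuitartExact] : IsIso (w.ranBaseChange.app F) :=
  (isIso_ranAdjunction_homEquiv_iff _ _).2
    ((B.isPointwiseRightKanExtensionRanCounit F).compTwoSquare w).isRightKanExtension

instance isIso_ranBaseChange [∀ F : C₃ ⥤ D, B.HasPointwiseRightKanExtension F]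
    [w.GuitartExact] : IsIso (w.ranBaseChange (D := D)) :=
  NatIso.isIso_of_isIso_app _

end RanBaseChange

variable {A : Type u₅} [Category.{v₅} A]
  {J₁ : GrothendieckTopology C₁} {J₂ : GrothendieckTopology C₂} {J₃ : GrothendieckTopology C₃}
  {J₄ : GrothendieckTopology C₄}
  {T : C₁ ⥤ C₂} {L : C₁ ⥤ C₃} {R : C₂ ⥤ C₄} {B : C₃ ⥤ C₄} (w : TwoSquare T L R B)
  [T.IsContinuous J₁ J₂] [B.IsContinuous J₃ J₄] [L.IsCocontinuous J₁ J₃] [R.IsCocontinuous J₂ J₄]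
  [∀ F : C₁ᵒᵖ ⥤ A, L.op.HasPointwiseRightKanExtension F]
  [∀ F : C₂ᵒᵖ ⥤ A, R.op.HasPointwiseRightKanExtension F]

def sheafBaseChangeIso [w.GuitartExact] :
    R.sheafPushforwardCocontinuous A J₂ J₄ ⋙ B.sheafPushforwardContinuous A J₃ J₄ ≅
      T.sheafPushforwardContinuous A J₁ J₂ ⋙ L.sheafPushforwardCocontinuous A J₁ J₃ :=
  ((fullyFaithfulSheafToPresheaf J₃ A).whiskeringRight _).preimageIso
    (isoWhiskerLeft (sheafToPresheaf J₂ A) (asIso w.op.ranBaseChange))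

end TwoSquare

end CategoryTheory

namespace SliceSite

variable {C : Type u} [SmallCategory C]

instance isCocontinuous_map (J : GrothendieckTopology C) {T' T : Cᵒᵖ ⥤ Type u} (v : T' ⟶ T) :
    (CostructuredArrow.map v).IsCocontinuous (sliceTopology J T') (sliceTopology J T) where
  cover_lift hS := J.superset_covering (fun _ _ hf ↦ hf) hS

variable {T T₁ T₂ : Cᵒᵖ ⥤ Type u} (u₁ : T₁ ⟶ T) (u₂ : T₂ ⟶ T)

def pullbackSquare : TwoSquare (CostructuredArrow.map (S := yoneda) (pullback.snd u₁ u₂))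
    (CostructuredArrow.map (pullback.fst u₁ u₂)) (CostructuredArrow.map u₂)
    (CostructuredArrow.map u₁) :=
  TwoSquare.mk _ _ _ _
    { app c := CostructuredArrow.homMk (𝟙 c.left) (by simp [pullback.condition])
      naturality _ _ f := by ext; simp }

instance guitartExact_pullbackSquare : (pullbackSquare u₁ u₂).GuitartExact where
  isConnected_rightwards {X₂ X₃} g := by
    have hg : (yoneda.map g.left ≫ X₃.hom) ≫ u₁ = X₂.hom ≫ u₂ := by
      simpa using CostructuredArrow.w g
    let P : (pullbackSquare u₁ u₂).StructuredArrowRightwards g :=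
      TwoSquare.StructuredArrowRightwards.mk _ _ (CostructuredArrow.mk (pullback.lift _ _ hg))
        (CostructuredArrow.homMk (𝟙 _) (by simpa using pullback.lift_snd _ _ hg))
        (CostructuredArrow.homMk g.left (by simpa using (pullback.lift_fst _ _ hg).symm))
        (by ext; simp [pullbackSquare])
    have hP (Q) : Nonempty (P ⟶ Q) := by
      obtain ⟨X₁, a, b, comm, rfl⟩ := TwoSquare.StructuredArrowRightwards.mk_surjective Q
      have hab : a.left ≫ b.left = g.left := by
        simpa [pullbackSquare] using congr_arg CommaMorphism.left comm
      refine ⟨StructuredArrow.homMk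
        (CostructuredArrow.homMk (CostructuredArrow.homMk a.left ?_) ?_) ?_⟩
      · have ha := CostructuredArrow.w a
        have hb := CostructuredArrow.w b
        dsimp at ha hb ⊢
        apply pullback.hom_ext
        · rw [Category.assoc, ← hb, ← Functor.map_comp_assoc, hab]
          exact (pullback.lift_fst _ _ _).symm
        · rw [Category.assoc, ha]
          exact (pullback.lift_snd _ _ _).symm
      · ext; exact hab
      · ext; exact Category.id_comp _
    have : Nonempty _ := ⟨P⟩
    exact zigzag_isConnected fun Q₁ Q₂ ↦
      (Zigzag.of_inv (hP Q₁).some).trans (Zigzag.of_hom (hP Q₂).some)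

end SliceSite

/-- Let `(C, J)` be a site, `T, T₁, T₂` presheaves of sets on `C` with
morphisms `u₁ : T₁ ⟶ T`, `u₂ : T₂ ⟶ T`, and let `T₁ ×_T T₂` be the fiber product
presheaf with projections `p₁, p₂`. The inverse image functors are precomposition on the
localized sites (the `IsContinuous` instance hypotheses record the fact, noted in the
context, that precomposition preserves sheaves), and the direct image functors are
(arbitrarily given) right adjoints of them. Then for every abelian sheaf `F` on
`(C_{/T₂}, J_{T₂})` there is an isomorphism `u₁⁻¹(u₂_* F) ≅ p₁_*(p₂⁻¹ F)`, naturally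
in `F`. -/
theorem statement7 {C : Type u} [SmallCategory C] (J : GrothendieckTopology C)
    {T T₁ T₂ : Cᵒᵖ ⥤ Type u} (u₁ : T₁ ⟶ T) (u₂ : T₂ ⟶ T)
    [(CostructuredArrow.map u₁).IsContinuous (sliceTopology J T₁) (sliceTopology J T)]
    [(CostructuredArrow.map u₂).IsContinuous (sliceTopology J T₂) (sliceTopology J T)]
    [(CostructuredArrow.map (pullback.fst u₁ u₂)).IsContinuous
      (sliceTopology J (pullback u₁ u₂)) (sliceTopology J T₁)]
    [(CostructuredArrow.map (pullback.snd u₁ u₂)).IsContinuous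
      (sliceTopology J (pullback u₁ u₂)) (sliceTopology J T₂)]
    (u₂Star : Sheaf (sliceTopology J T₂) AddCommGrpCat.{u} ⥤
      Sheaf (sliceTopology J T) AddCommGrpCat.{u})
    (adj₂ : (CostructuredArrow.map u₂).sheafPushforwardContinuous AddCommGrpCat.{u}
      (sliceTopology J T₂) (sliceTopology J T) ⊣ u₂Star)
    (p₁Star : Sheaf (sliceTopology J (pullback u₁ u₂)) AddCommGrpCat.{u} ⥤
      Sheaf (sliceTopology J T₁) AddCommGrpCat.{u})
    (adjP : (CostructuredArrow.map (pullback.fst u₁ u₂)).sheafPushforwardContinuous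
      AddCommGrpCat.{u} (sliceTopology J (pullback u₁ u₂)) (sliceTopology J T₁) ⊣ p₁Star) :
    Nonempty
      (u₂Star ⋙ (CostructuredArrow.map u₁).sheafPushforwardContinuous AddCommGrpCat.{u}
          (sliceTopology J T₁) (sliceTopology J T) ≅
        (CostructuredArrow.map (pullback.snd u₁ u₂)).sheafPushforwardContinuous
            AddCommGrpCat.{u} (sliceTopology J (pullback u₁ u₂)) (sliceTopology J T₂) ⋙
          p₁Star) :=
  ⟨Functor.isoWhiskerRight (adj₂.rightAdjointUniq
      ((CostructuredArrow.map u₂).sheafAdjunctionCocontinuous _ _ _)) _ ≪≫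
    (pullbackSquare u₁ u₂).sheafBaseChangeIso ≪≫
    Functor.isoWhiskerLeft _ (adjP.rightAdjointUniq
      ((CostructuredArrow.map (pullback.fst u₁ u₂)).sheafAdjunctionCocontinuous _ _ _)).symm⟩

end
end
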